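/- Let (σ_i)_{i∈Π} be a secure equilibrium in a multiplayer quantitative reachability game (G, v₀), with outcome ρ and cost profile (x_i)_{i∈Π}. Let h be a j-promising history w.r.t. (σ_i) for some player j ∈ Π, and assume, writing Π = {1, …, n}, that x₁ ≤ … ≤ x_k ≤ |h| < |h| + |V| ≤ x_{k+1} ≤ … ≤ x_l < x_{l+1} = … = x_n = +∞ where 0 ≤ k ≤ l ≤ n. Then the coalition Π ∖ {j} has a memoryless winning strategy from v = last(h) in the qualitative two-player zero-sum reachability under safety game 𝒢_{-j} = (G_{-j}, R, S), where: if j ≤ k then R = ∪_{i>k} F_i and S = V; if k < j ≤ l then R = V and S = V ∖ F_j; if l < j and Cost(ρ_{≤|h|}) ⪯_j Cost(h) then R = ∪_{i>k, i≠j} F_i and S = V ∖ F_j; and if l < j and not Cost(ρ_{≤|h|}) ⪯_j Cost(h) then R = V and S = V ∖ F_j. -/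

import Mathlib

open scoped Classical ENat

/-- A multiplayer quantitative reachability game: a finite directed graph whose
vertices are partitioned among the players (via `owner`), every vertex has an
outgoing edge, and each player `i` has a nonempty goal set `F i`. -/
structure QRGame (ι V : Type) where
  owner : V → ι
  E : V → V → Prop
  total : ∀ v, ∃ w, E v w
  F : ι → Set V
  F_ne : ∀ i, (F i).Nonempty

namespace QRGame

variable {ι V : Type}

/-- Histories are encoded as *reversed* nonempty lists: the head is the current
vertex, the last element is the initial vertex `v₀`, and consecutive elements
are joined by edges of the graph. -/
def IsHist (G : QRGame ι V) (v₀ : V) : List V → Prop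
  | [] => False
  | [v] => v = v₀
  | v :: w :: t => G.E w v ∧ IsHist G v₀ (w :: t)

/-- The current (i.e. most recent) vertex of a history. -/
def cur (v₀ : V) (h : List V) : V := h.headD v₀

/-- `σ` is a valid strategy of player `i`: on every history whose current
vertex belongs to player `i`, it chooses a successor along an edge. -/
def IsStrat (G : QRGame ι V) (v₀ : V) (i : ι) (σ : List V → V) : Prop :=
  ∀ h : List V, G.IsHist v₀ h → G.owner (cur v₀ h) = i → G.E (cur v₀ h) (σ h)

/-- A strategy profile: one valid strategy for each player. -/
def IsProfile (G : QRGame ι V) (v₀ : V) (σ : ι → List V → V) : Prop :=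
  ∀ i, G.IsStrat v₀ i (σ i)

/-- The history reached after `n` further steps when all players follow the
profile `σ` from the history `h` on. -/
def histFrom (G : QRGame ι V) (v₀ : V) (σ : ι → List V → V) (h : List V) : ℕ → List V
  | 0 => h
  | n + 1 =>
      σ (G.owner (cur v₀ (histFrom G v₀ σ h n))) (histFrom G v₀ σ h n)
        :: histFrom G v₀ σ h n

/-- The full play (indexed from time `0`) whose prefix is the history `h` and
which is consistent with the profile `σ` after `h`. -/
def fullPlay (G : QRGame ι V) (v₀ : V) (σ : ι → List V → V) (h : List V) (t : ℕ) : V :=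
  (G.histFrom v₀ σ h t).reverse.getD t v₀

/-- The outcome `⟨(σ_i)⟩_{v₀}` of the profile `σ` from the initial vertex. -/
def outcome (G : QRGame ι V) (v₀ : V) (σ : ι → List V → V) : ℕ → V :=
  G.fullPlay v₀ σ [v₀]

/-- Cost of player `i` for a play `ρ`: the least `l` with `ρ l ∈ F i`,
and `⊤` (i.e. `+∞`) if there is no such `l`. -/
noncomputable def cost (G : QRGame ι V) (i : ι) (ρ : ℕ → V) : ℕ∞ :=
  ⨅ l ∈ {l : ℕ | ρ l ∈ G.F i}, (l : ℕ∞)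

/-- Cost of player `i` for the finite prefix `ρ₀ … ρ_{m-1}` of a play. -/
noncomputable def costLT (G : QRGame ι V) (i : ι) (ρ : ℕ → V) (m : ℕ) : ℕ∞ :=
  ⨅ l ∈ {l : ℕ | l < m ∧ ρ l ∈ G.F i}, (l : ℕ∞)

end QRGame

/-- The preference relation `≺_j` of player `j` on cost profiles:
`x ≺_j y` iff `x j > y j`, or `x j = y j`, every player's cost does not
decrease, and some player's cost strictly increases. -/
def Prec {ι : Type} (j : ι) (x y : ι → ℕ∞) : Prop :=
  y j < x j ∨ (x j = y j ∧ (∀ i, x i ≤ y i) ∧ ∃ i, x i < y i)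

namespace QRGame

variable {ι V : Type} [DecidableEq ι]

/-- `σ` restricted after the history `h` is a secure equilibrium in the subgame
`(G|_h, cur h)`: no player `j` has a `≺_j`-profitable deviation after `h`
(costs are computed on the whole play, including the prefix `h`). -/
def IsSecureAfter (G : QRGame ι V) (v₀ : V) (σ : ι → List V → V) (h : List V) : Prop :=
  ¬ ∃ (j : ι) (σ' : List V → V), G.IsStrat v₀ j σ' ∧
      Prec j (fun i => G.cost i (G.fullPlay v₀ σ h))
        (fun i => G.cost i (G.fullPlay v₀ (Function.update σ j σ') h))

/-- A secure equilibrium in `(G, v₀)`. -/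
def IsSecure (G : QRGame ι V) (v₀ : V) (σ : ι → List V → V) : Prop :=
  G.IsSecureAfter v₀ σ [v₀]

/-- A subgame perfect secure equilibrium: a secure equilibrium in every subgame. -/
def IsSPSE (G : QRGame ι V) (v₀ : V) (σ : ι → List V → V) : Prop :=
  ∀ h : List V, G.IsHist v₀ h → G.IsSecureAfter v₀ σ h

end QRGame

/-- `x ⪯_j y` iff `x ≺_j y` or `x = y`. -/
def PrecEq {ι : Type} (j : ι) (x y : ι → ℕ∞) : Prop := Prec j x y ∨ x = y

namespace QRGame

variable {ι V : Type}

/-- Cost of player `i` for a (reversed) finite history `h`: the least `l` such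
that the `l`-th vertex of `h` (in chronological order) is in `F i`, and `⊤` if
`h` does not visit `F i`. -/
noncomputable def histCost (G : QRGame ι V) (v₀ : V) (i : ι) (h : List V) : ℕ∞ :=
  G.costLT i (fun t => h.reverse.getD t v₀) h.length

/-- The (reversed) history `h` is consistent with `σ_{-j}`: at every step taken
from a vertex not owned by `j`, the move prescribed by the profile `σ` was
played. -/
def ConsistentWith (G : QRGame ι V) (v₀ : V) (σ : ι → List V → V) (j : ι) :
    List V → Prop
  | [] => True
  | [_] => True
  | v :: w :: t =>
      (G.owner w ≠ j → v = σ (G.owner w) (w :: t)) ∧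
        ConsistentWith G v₀ σ j (w :: t)

/-- The history `h` is `j`-promising w.r.t. the profile `σ` with cost profile
`x`, where `k` is such that `x` (sorted increasingly) satisfies
`x_k ≤ |h| < x_{k+1}` (players are `0`-based, so "player `j ≤ k`" reads
`(j : ℕ) < k`): `h` is consistent with `σ_{-j}` and the costs along `h` behave
as in Definition 5.2, the two cases being `x_{k+1} < +∞` and `x_{k+1} = +∞`. -/
noncomputable def Promising (G : QRGame ι V) (v₀ : V) (σ : ι → List V → V)
    (x : ι → ℕ∞) (k : ℕ) (val : ι → ℕ) (j : ι) (h : List V) : Prop :=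
  G.ConsistentWith v₀ σ j h ∧
    (if ∃ i : ι, k ≤ val i ∧ x i ≠ ⊤ then
      (if val j < k then
        G.histCost v₀ j h = x j ∧ ∀ i, x i ≤ G.histCost v₀ i h
      else G.histCost v₀ j h = ⊤)
    else
      G.histCost v₀ j h = x j ∧ (∀ i, x i ≤ G.histCost v₀ i h) ∧
        ∃ i, x i < G.histCost v₀ i h)

/-- The coalition `Π ∖ {j}` has a memoryless winning strategy from `v` in the
qualitative two-player zero-sum reachability under safety game `𝒢_{-j}`,
where the coalition (controlling the vertices not owned by `j`) aims at
reaching `R` while staying in `S`. -/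
def CoalitionWinsML (G : QRGame ι V) (j : ι) (R S : Set V) (v : V) : Prop :=
  ∃ f : V → V, (∀ u, G.E u (f u)) ∧
    ∀ ρ : ℕ → V, ρ 0 = v → (∀ t, G.E (ρ t) (ρ (t + 1))) →
      (∀ t, G.owner (ρ t) ≠ j → ρ (t + 1) = f (ρ t)) →
      (∃ t, ρ t ∈ R) ∧ ∀ t, ρ t ∈ S

end QRGame

/-!
If the coalition `Π ∖ {j}` does not win the reachability-under-safety game from `last(h)`, then,
these games on finite arenas being memorylessly determined through attractors, `j` has a
memoryless strategy `g` under which every play either leaves `S` or never visits `R`; in the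
safety games (`R = V`) the attractor strategy even reaches `F_j` within `|V| - 1` steps.
Replaying `h` and then following `g` is a deviation of `j` from `(σ_i)`, and since `h` is
`j`-promising its cost profile is `≺_j`-better than `x`: either `j` reaches `F_j` before `x_j`,
or `j` keeps its cost while every player `i > k` other than `j` misses its goal and some cost
increases strictly. This contradicts security.
-/

section Attractor

lemma Set.iterate_fixed_of_card_le {α : Type} [Fintype α] {f : Set α → Set α}
    (hf : ∀ s, s ⊆ f s) (s : Set α) {N : ℕ} (hN : Fintype.card α ≤ N + s.ncard) :
    f (f^[N] s) = f^[N] s := by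
  by_cases hstuck : ∃ i < N, f (f^[i] s) = f^[i] s
  · obtain ⟨i, hi, hfix⟩ := hstuck
    rw [← Nat.sub_add_cancel hi.le, Function.iterate_add_apply, Function.iterate_fixed hfix]
    exact hfix
  · push Not at hstuck
    have hgrow : ∀ M ≤ N, M + s.ncard ≤ (f^[M] s).ncard := by
      intro M
      induction M with
      | zero => simp
      | succ M ih =>
        intro hM
        have hssub : f^[M] s ⊂ f^[M + 1] s := by
          rw [Function.iterate_succ_apply']
          exact (hf _).ssubset_of_ne (hstuck M hM).symm
        have := Set.ncard_lt_ncard hssub (Set.toFinite _)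
        have := ih (by omega)
        omega
    have huniv : f^[N] s = Set.univ :=
      Set.eq_of_subset_of_ncard_le (Set.subset_univ _)
        (by rw [Set.ncard_univ, Nat.card_eq_fintype_card]; linarith [hgrow N le_rfl])
    rw [huniv]
    exact Set.univ_subset_iff.1 (hf _)

lemma Set.iUnion_iterate_eq_of_card_le {α : Type} [Fintype α] {f : Set α → Set α}
    (hf : ∀ s, s ⊆ f s) (s : Set α) {N : ℕ} (hN : Fintype.card α ≤ N + s.ncard) :
    ⋃ m, f^[m] s = f^[N] s := by
  have hmono : Monotone fun m => f^[m] s :=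
    monotone_nat_of_le_succ fun m => by rw [Function.iterate_succ_apply']; exact hf _
  refine (Set.iUnion_subset fun m => ?_).antisymm (Set.subset_iUnion (fun m => f^[m] s) N)
  rcases le_total m N with hm | hm
  · exact hmono hm
  · rw [← Nat.sub_add_cancel hm, Function.iterate_add_apply,
      Function.iterate_fixed (Set.iterate_fixed_of_card_le hf s hN)]

variable {V : Type} (E : V → V → Prop) (P D : Set V)

/-- One step of the attractor of the player owning the vertices `P`, confined to `D`. -/
def attrStep (A : Set V) : Set V :=
  A ∪ {u | u ∈ D ∧ ((u ∈ P ∧ ∃ w, E u w ∧ w ∈ A) ∨ (u ∉ P ∧ ∀ w, E u w → w ∈ A))}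

def attr (T : Set V) (m : ℕ) : Set V := (attrStep E P D)^[m] T

/-- The vertices from which the owner of `Pᶜ` can keep the play in `S` forever. -/
def safeRegion (S : Set V) : Set V := (⋃ m, attr E P Set.univ Sᶜ m)ᶜ

/-- The winning region of the owner of `Pᶜ` for reaching `R` while staying in `S`; after
reaching `R` the play must still stay in `S` forever, hence the target `R ∩ safeRegion`. -/
def winRegion (R S : Set V) : Set V :=
  ⋃ m, attr E Pᶜ (safeRegion E P S) (R ∩ safeRegion E P S) m

variable {E P D} {T : Set V}

lemma attr_succ (m : ℕ) : attr E P D T (m + 1) = attrStep E P D (attr E P D T m) :=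
  Function.iterate_succ_apply' _ _ _

lemma attr_mono : Monotone (attr E P D T) :=
  monotone_nat_of_le_succ fun m => (attr_succ m).symm ▸ Set.subset_union_left

lemma attr_subset (hT : T ⊆ D) : ∀ m, attr E P D T m ⊆ D
  | 0 => hT
  | m + 1 => by
    rw [attr_succ]
    exact Set.union_subset (attr_subset hT m) fun _ hu => hu.1

lemma iUnion_attr_eq [Fintype V] {N : ℕ} (hN : Fintype.card V ≤ N + T.ncard) :
    ⋃ m, attr E P D T m = attr E P D T N :=
  Set.iUnion_iterate_eq_of_card_le (fun _ => Set.subset_union_left) T hN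

lemma mem_iUnion_attr_of_mem_attrStep [Fintype V] {u : V}
    (hu : u ∈ attrStep E P D (⋃ m, attr E P D T m)) : u ∈ ⋃ m, attr E P D T m := by
  rw [iUnion_attr_eq (le_add_right le_rfl), ← attr_succ] at hu
  exact Set.mem_iUnion.2 ⟨_, hu⟩

lemma attr_rank_unique {u : V} {m m' : ℕ}
    (h : u ∈ attr E P D T (m + 1)) (h' : u ∉ attr E P D T m)
    (hu : u ∈ attr E P D T (m' + 1)) (hu' : u ∉ attr E P D T m') : m = m' :=
  le_antisymm (not_lt.1 fun hlt => h' (attr_mono hlt hu))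
    (not_lt.1 fun hlt => hu' (attr_mono hlt h))

/-- The last clause covers the vertices of `T` and those outside the attractor. -/
lemma exists_attr_strategy (f₀ : V → V) (hf₀ : ∀ u, E u (f₀ u)) :
    ∃ f : V → V, (∀ u, E u (f u)) ∧
      (∀ u ∈ P, ∀ m, u ∈ attr E P D T (m + 1) → u ∉ attr E P D T m → f u ∈ attr E P D T m) ∧
      (∀ u, (∀ m, u ∈ attr E P D T (m + 1) → u ∈ attr E P D T m) → f u = f₀ u) := by
  have key : ∀ u, ∃ w, E u w ∧
      (u ∈ P → ∀ m, u ∈ attr E P D T (m + 1) → u ∉ attr E P D T m → w ∈ attr E P D T m) ∧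
      ((∀ m, u ∈ attr E P D T (m + 1) → u ∈ attr E P D T m) → w = f₀ u) := by
    intro u
    by_cases hrank : ∃ m, u ∈ P ∧ u ∈ attr E P D T (m + 1) ∧ u ∉ attr E P D T m
    · obtain ⟨m, hP, hm, hm'⟩ := hrank
      obtain ⟨w, hw, hwA⟩ : ∃ w, E u w ∧ w ∈ attr E P D T m := by
        rw [attr_succ] at hm
        rcases hm with hm | ⟨-, ⟨-, hex⟩ | ⟨hnP, -⟩⟩
        exacts [absurd hm hm', hex, absurd hP hnP]
      refine ⟨w, hw, fun _ m' hu hu' => attr_rank_unique hm hm' hu hu' ▸ hwA, fun hnew => ?_⟩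
      exact absurd (hnew m hm) hm'
    · push Not at hrank
      exact ⟨f₀ u, hf₀ u, fun hP m hm hm' => absurd (hrank m hP hm) hm', fun _ => rfl⟩
  choose f hfE hfP hf₀' using key
  exact ⟨f, hfE, hfP, hf₀'⟩

lemma exists_le_mem_of_mem_attr {f : V → V}
    (hf : ∀ u ∈ P, ∀ m, u ∈ attr E P D T (m + 1) → u ∉ attr E P D T m → f u ∈ attr E P D T m) :
    ∀ m (ρ : ℕ → V), (∀ t, E (ρ t) (ρ (t + 1))) → (∀ t, ρ t ∈ P → ρ (t + 1) = f (ρ t)) →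
      ρ 0 ∈ attr E P D T m → ∃ t ≤ m, ρ t ∈ T
  | 0, _, _, _, h0 => ⟨0, le_rfl, h0⟩
  | m + 1, ρ, hedge, hfol, h0 => by
    by_cases hm : ρ 0 ∈ attr E P D T m
    · obtain ⟨t, ht, hT⟩ := exists_le_mem_of_mem_attr hf m ρ hedge hfol hm
      exact ⟨t, ht.trans m.le_succ, hT⟩
    · have h1 : ρ 1 ∈ attr E P D T m := by
        have h0' := h0
        rw [attr_succ] at h0'
        rcases h0' with h0' | ⟨-, ⟨hP, -⟩ | ⟨-, hall⟩⟩
        · exact absurd h0' hm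
        · exact hfol 0 hP ▸ hf _ hP m h0 hm
        · exact hall _ (hedge 0)
      obtain ⟨t, ht, hT⟩ := exists_le_mem_of_mem_attr hf m (fun t => ρ (t + 1))
        (fun t => hedge (t + 1)) (fun t => hfol (t + 1)) h1
      exact ⟨t + 1, by omega, hT⟩

end Attractor

section ReachSafety

variable {V : Type} {E : V → V → Prop} {P R S : Set V}

lemma safeRegion_subset : safeRegion E P S ⊆ S :=
  fun _ hu => by_contra fun hS => hu (Set.mem_iUnion.2 ⟨0, hS⟩)

variable [Fintype V]

lemma exists_edge_mem_safeRegion {u : V} (hu : u ∈ safeRegion E P S) (hP : u ∉ P) :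
    ∃ w, E u w ∧ w ∈ safeRegion E P S := by
  by_contra! h
  exact hu (mem_iUnion_attr_of_mem_attrStep
    (Or.inr ⟨trivial, Or.inr ⟨hP, fun w hw => not_not.1 (h w hw)⟩⟩))

lemma edge_mem_safeRegion {u w : V} (hu : u ∈ safeRegion E P S) (hP : u ∈ P) (hw : E u w) :
    w ∈ safeRegion E P S :=
  fun hw' => hu (mem_iUnion_attr_of_mem_attrStep (Or.inr ⟨trivial, Or.inl ⟨hP, w, hw, hw'⟩⟩))

lemma exists_edge_not_mem_winRegion {u : V} (hu : u ∈ safeRegion E P S)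
    (hu' : u ∉ winRegion E P R S) (hP : u ∈ P) : ∃ w, E u w ∧ w ∉ winRegion E P R S := by
  by_contra! h
  exact hu' (mem_iUnion_attr_of_mem_attrStep (Or.inr ⟨hu, Or.inr ⟨not_not.2 hP, h⟩⟩))

lemma mem_winRegion_of_edge {u w : V} (hu : u ∈ safeRegion E P S) (hP : u ∉ P) (hw : E u w)
    (hw' : w ∈ winRegion E P R S) : u ∈ winRegion E P R S :=
  mem_iUnion_attr_of_mem_attrStep (Or.inr ⟨hu, Or.inl ⟨hP, w, hw, hw'⟩⟩)

theorem exists_strategy_of_mem_winRegion (htot : ∀ u, ∃ w, E u w) {v : V}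
    (hv : v ∈ winRegion E P R S) :
    ∃ f : V → V, (∀ u, E u (f u)) ∧
      ∀ ρ : ℕ → V, ρ 0 = v → (∀ t, E (ρ t) (ρ (t + 1))) →
        (∀ t, ρ t ∉ P → ρ (t + 1) = f (ρ t)) → (∃ t, ρ t ∈ R) ∧ ∀ t, ρ t ∈ S := by
  have hsafe₀ : ∀ u, ∃ w, E u w ∧ (u ∈ safeRegion E P S → u ∉ P → w ∈ safeRegion E P S) := by
    intro u
    by_cases hu : u ∈ safeRegion E P S ∧ u ∉ P
    · obtain ⟨w, hw, hws⟩ := exists_edge_mem_safeRegion hu.1 hu.2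
      exact ⟨w, hw, fun _ _ => hws⟩
    · obtain ⟨w, hw⟩ := htot u
      exact ⟨w, hw, fun h h' => absurd ⟨h, h'⟩ hu⟩
  choose f₀ hf₀E hf₀ using hsafe₀
  obtain ⟨f, hfE, hfattr, hff₀⟩ := exists_attr_strategy (P := Pᶜ) (D := safeRegion E P S)
    (T := R ∩ safeRegion E P S) f₀ hf₀E
  have hfsafe : ∀ u ∈ safeRegion E P S, u ∉ P → f u ∈ safeRegion E P S := by
    intro u hu hP
    by_cases hnew : ∀ m, u ∈ attr E Pᶜ (safeRegion E P S) (R ∩ safeRegion E P S) (m + 1) →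
        u ∈ attr E Pᶜ (safeRegion E P S) (R ∩ safeRegion E P S) m
    · exact hff₀ u hnew ▸ hf₀ u hu hP
    · push Not at hnew
      obtain ⟨m, hm, hm'⟩ := hnew
      exact attr_subset Set.inter_subset_right m (hfattr u hP m hm hm')
  obtain ⟨m, hm⟩ := Set.mem_iUnion.1 hv
  refine ⟨f, hfE, fun ρ h0 hedge hfol => ⟨?_, fun t => safeRegion_subset (E := E) (P := P) ?_⟩⟩
  · obtain ⟨t, -, hR, -⟩ := exists_le_mem_of_mem_attr hfattr m ρ hedge hfol (h0 ▸ hm)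
    exact ⟨t, hR⟩
  · induction t with
    | zero => exact attr_subset Set.inter_subset_right m (h0 ▸ hm)
    | succ t ih =>
      by_cases hP : ρ t ∈ P
      · exact edge_mem_safeRegion ih hP (hedge t)
      · exact hfol t hP ▸ hfsafe _ ih hP

theorem exists_counterStrategy_of_not_mem_winRegion (htot : ∀ u, ∃ w, E u w) :
    ∃ g : V → V, (∀ u, E u (g u)) ∧
      ∀ ρ : ℕ → V, ρ 0 ∉ winRegion E P R S → (∀ t, E (ρ t) (ρ (t + 1))) →
        (∀ t, ρ t ∈ P → ρ (t + 1) = g (ρ t)) → (∀ t, ρ t ∈ S) → ∀ t, ρ t ∉ R := by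
  have hout : ∀ u, ∃ w, E u w ∧
      (u ∈ safeRegion E P S → u ∉ winRegion E P R S → u ∈ P → w ∉ winRegion E P R S) := by
    intro u
    by_cases hu : u ∈ safeRegion E P S ∧ u ∉ winRegion E P R S ∧ u ∈ P
    · obtain ⟨w, hw, hww⟩ := exists_edge_not_mem_winRegion hu.1 hu.2.1 hu.2.2
      exact ⟨w, hw, fun _ _ _ => hww⟩
    · obtain ⟨w, hw⟩ := htot u
      exact ⟨w, hw, fun h h' h'' => absurd ⟨h, h', h''⟩ hu⟩
  choose g₀ hg₀E hg₀ using hout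
  obtain ⟨g, hgE, hgattr, hgg₀⟩ := exists_attr_strategy (E := E) (P := P) (D := Set.univ)
    (T := Sᶜ) g₀ hg₀E
  refine ⟨g, hgE, fun ρ h0 hedge hfol hS => ?_⟩
  have hsafe : ∀ t, ρ t ∈ safeRegion E P S := by
    intro t hunsafe
    obtain ⟨m, hm⟩ := Set.mem_iUnion.1 hunsafe
    obtain ⟨s, -, hs⟩ := exists_le_mem_of_mem_attr hgattr m (fun s => ρ (t + s))
      (fun s => hedge (t + s)) (fun s => hfol (t + s)) hm
    exact hs (hS (t + s))
  have hwin : ∀ t, ρ t ∉ winRegion E P R S := by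
    intro t
    induction t with
    | zero => exact h0
    | succ t ih =>
      by_cases hP : ρ t ∈ P
      · have hnew : ∀ m, ρ t ∈ attr E P Set.univ Sᶜ (m + 1) → ρ t ∈ attr E P Set.univ Sᶜ m :=
          fun m hm => absurd (Set.mem_iUnion.2 ⟨_, hm⟩) (hsafe t)
        rw [hfol t hP, hgg₀ _ hnew]
        exact hg₀ _ (hsafe t) ih hP
      · exact fun hw => ih (mem_winRegion_of_edge (hsafe t) hP (hedge t) hw)
  exact fun t hR => hwin t (Set.mem_iUnion.2 ⟨0, hR, hsafe t⟩)

theorem exists_counterStrategy_of_not_mem_safeRegion (htot : ∀ u, ∃ w, E u w)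
    (hS : Sᶜ.Nonempty) :
    ∃ g : V → V, (∀ u, E u (g u)) ∧
      ∀ ρ : ℕ → V, ρ 0 ∉ safeRegion E P S → (∀ t, E (ρ t) (ρ (t + 1))) →
        (∀ t, ρ t ∈ P → ρ (t + 1) = g (ρ t)) → ∃ t < Fintype.card V, ρ t ∉ S := by
  choose g₀ hg₀ using htot
  obtain ⟨g, hgE, hgattr, -⟩ := exists_attr_strategy (E := E) (P := P) (D := Set.univ)
    (T := Sᶜ) g₀ hg₀
  refine ⟨g, hgE, fun ρ h0 hedge hfol => ?_⟩
  have hcard : 0 < Sᶜ.ncard := (Set.ncard_pos (Set.toFinite _)).2 hS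
  have hV : 0 < Fintype.card V := Fintype.card_pos_iff.2 ⟨ρ 0⟩
  have h0' : ρ 0 ∈ attr E P Set.univ Sᶜ (Fintype.card V - 1) := by
    rw [← iUnion_attr_eq (by omega)]
    exact not_not.1 h0
  obtain ⟨t, ht, hSt⟩ := exists_le_mem_of_mem_attr hgattr _ ρ hedge hfol h0'
  exact ⟨t, by omega, hSt⟩

end ReachSafety

lemma PrecEq.le {ι : Type} {j : ι} {x y : ι → ℕ∞} (h : PrecEq j x y) (hj : x j = y j) :
    ∀ i, x i ≤ y i := by
  rcases h with (hlt | ⟨-, hle, -⟩) | rfl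
  exacts [absurd hj hlt.ne', hle, fun _ => le_rfl]

namespace QRGame

section Cost

variable {ι V : Type} (G : QRGame ι V) {i : ι} {ρ ρ' : ℕ → V} {m t : ℕ} {c : ℕ∞}

lemma le_cost_iff : c ≤ G.cost i ρ ↔ ∀ t, ρ t ∈ G.F i → c ≤ t := le_iInf₂_iff

lemma cost_le (ht : ρ t ∈ G.F i) : G.cost i ρ ≤ t := iInf₂_le t ht

lemma le_costLT_iff : c ≤ G.costLT i ρ m ↔ ∀ t < m, ρ t ∈ G.F i → c ≤ t := by
  simp only [costLT, le_iInf₂_iff, Set.mem_ofPred_eq, and_imp]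

lemma cost_eq_top_iff : G.cost i ρ = ⊤ ↔ ∀ t, ρ t ∉ G.F i := by
  rw [← top_le_iff, le_cost_iff]
  simp

lemma costLT_eq_top_iff : G.costLT i ρ m = ⊤ ↔ ∀ t < m, ρ t ∉ G.F i := by
  rw [← top_le_iff, le_costLT_iff]
  simp

lemma costLT_eq_top_of_le (h : (m : ℕ∞) ≤ G.costLT i ρ m) : G.costLT i ρ m = ⊤ :=
  (G.costLT_eq_top_iff).2 fun t ht hF =>
    (h.trans ((G.le_costLT_iff).1 le_rfl t ht hF)).not_gt (by exact_mod_cast ht)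

lemma costLT_eq_top_of_le_cost (h : (m : ℕ∞) ≤ G.cost i ρ) : G.costLT i ρ m = ⊤ :=
  (G.costLT_eq_top_iff).2 fun t ht hF =>
    (h.trans (G.cost_le hF)).not_gt (by exact_mod_cast ht)

lemma le_cost_of_le_costLT (hc : c ≤ G.costLT i ρ m) (hm : c ≤ m) : c ≤ G.cost i ρ :=
  (G.le_cost_iff).2 fun t hF => by
    rcases lt_or_ge t m with ht | ht
    · exact (G.le_costLT_iff).1 hc t ht hF
    · exact hm.trans (by exact_mod_cast ht)

lemma lt_cost_of_lt_costLT (hc : c < G.costLT i ρ m) (hm : c < m) : c < G.cost i ρ := by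
  have hc' : c ≠ ⊤ := hm.ne_top
  rw [← ENat.add_one_le_iff hc'] at hc hm ⊢
  exact G.le_cost_of_le_costLT hc hm

lemma cost_eq_costLT_of_ne_top (h : G.costLT i ρ m ≠ ⊤) : G.cost i ρ = G.costLT i ρ m := by
  refine le_antisymm ((G.le_costLT_iff).2 fun t _ hF => G.cost_le hF)
    (G.le_cost_of_le_costLT le_rfl ?_)
  by_contra hlt
  exact h (G.costLT_eq_top_of_le (not_le.1 hlt).le)

lemma costLT_eq_cost_of_lt (h : G.cost i ρ < m) : G.costLT i ρ m = G.cost i ρ := by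
  obtain ⟨t, hF, htm⟩ : ∃ t, ρ t ∈ G.F i ∧ (t : ℕ∞) < m := by
    by_contra! hnot
    exact h.not_ge ((G.le_cost_iff).2 hnot)
  refine (G.cost_eq_costLT_of_ne_top fun htop => ?_).symm
  exact (G.costLT_eq_top_iff).1 htop t (by exact_mod_cast htm) hF

lemma cost_eq_top_of_tail (hpre : G.costLT i ρ m = ⊤) (hn : t ≤ m)
    (htail : ∀ s, ρ (t + s) ∉ G.F i) : G.cost i ρ = ⊤ :=
  (G.cost_eq_top_iff).2 fun u => by
    rcases lt_or_ge u m with hu | hu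
    · exact (G.costLT_eq_top_iff).1 hpre u hu
    · simpa [Nat.add_sub_cancel' (hn.trans hu)] using htail (u - t)

lemma costLT_congr (h : ∀ t < m, ρ t = ρ' t) : G.costLT i ρ m = G.costLT i ρ' m := by
  have hset : {t | t < m ∧ ρ t ∈ G.F i} = {t | t < m ∧ ρ' t ∈ G.F i} :=
    Set.ext fun t => and_congr_right fun ht => by rw [h t ht]
  simp only [costLT, hset]

end Cost

variable {ι V : Type} {G : QRGame ι V} {v₀ : V}

section Plays

lemma IsHist.length_pos {h : List V} (hh : G.IsHist v₀ h) : 0 < h.length := by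
  cases h with
  | nil => exact hh.elim
  | cons => simp

lemma IsHist.edge_of_suffix : ∀ {h : List V}, G.IsHist v₀ h →
    ∀ {v w : V} {t : List V}, v :: w :: t <:+ h → G.E w v
  | [], _, _, _, _, hs => absurd hs.length_le (by simp)
  | [_], _, _, _, _, hs => absurd hs.length_le (by simp)
  | a :: b :: h, hh, v, w, t, hs => by
    rcases List.suffix_cons_iff.1 hs with heq | hs
    · obtain ⟨rfl, rfl, rfl⟩ : v = a ∧ w = b ∧ t = h := by simpa using heq
      exact hh.1
    · exact hh.2.edge_of_suffix hs

lemma ConsistentWith.eq_of_suffix {σ : ι → List V → V} {j : ι} : ∀ {h : List V},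
    G.ConsistentWith v₀ σ j h → ∀ {v w : V} {t : List V}, v :: w :: t <:+ h →
      G.owner w ≠ j → v = σ (G.owner w) (w :: t)
  | [], _, _, _, _, hs => absurd hs.length_le (by simp)
  | [_], _, _, _, _, hs => absurd hs.length_le (by simp)
  | a :: b :: h, hc, v, w, t, hs => by
    rcases List.suffix_cons_iff.1 hs with heq | hs
    · obtain ⟨rfl, rfl, rfl⟩ : v = a ∧ w = b ∧ t = h := by simpa using heq
      exact hc.1
    · exact hc.2.eq_of_suffix hs

variable (G v₀) (τ : ι → List V → V)

lemma histFrom_length (h : List V) : ∀ m, (G.histFrom v₀ τ h m).length = h.length + m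
  | 0 => rfl
  | m + 1 => congrArg (· + 1) (histFrom_length h m)

lemma getD_reverse_histFrom {t m : ℕ} (ht : t ≤ m) :
    (G.histFrom v₀ τ [v₀] m).reverse.getD t v₀ = G.fullPlay v₀ τ [v₀] t := by
  induction m, ht using Nat.le_induction with
  | base => rfl
  | succ m _ ih =>
    rw [← ih, histFrom, List.reverse_cons, List.getD_append]
    simp only [List.length_reverse, histFrom_length, List.length_singleton]
    omega

lemma cur_histFrom (t : ℕ) : cur v₀ (G.histFrom v₀ τ [v₀] t) = G.fullPlay v₀ τ [v₀] t := by
  rw [← getD_reverse_histFrom G v₀ τ le_rfl, List.getD_reverse _ (by simp [histFrom_length])]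
  simp [cur, histFrom_length, List.getD_eq_getElem?_getD, List.head?_eq_getElem?]

lemma fullPlay_succ (t : ℕ) : G.fullPlay v₀ τ [v₀] (t + 1) =
    τ (G.owner (G.fullPlay v₀ τ [v₀] t)) (G.histFrom v₀ τ [v₀] t) := by
  rw [← cur_histFrom, ← cur_histFrom]
  rfl

lemma histFrom_isHist (hτ : G.IsProfile v₀ τ) : ∀ m, G.IsHist v₀ (G.histFrom v₀ τ [v₀] m)
  | 0 => rfl
  | m + 1 => by
    have ih := histFrom_isHist hτ m
    obtain ⟨w, t, hwt⟩ := List.exists_cons_of_length_pos ih.length_pos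
    rw [histFrom, hwt]
    rw [hwt] at ih
    exact ⟨hτ _ _ ih rfl, ih⟩

lemma fullPlay_edge (hτ : G.IsProfile v₀ τ) (t : ℕ) :
    G.E (G.fullPlay v₀ τ [v₀] t) (G.fullPlay v₀ τ [v₀] (t + 1)) := by
  rw [fullPlay_succ, ← cur_histFrom]
  exact hτ _ _ (histFrom_isHist G v₀ τ hτ t) rfl

lemma histFrom_eq_of_follows : ∀ {h : List V}, G.IsHist v₀ h →
    (∀ v w t, v :: w :: t <:+ h → τ (G.owner w) (w :: t) = v) →
    G.histFrom v₀ τ [v₀] (h.length - 1) = h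
  | [], hh, _ => hh.elim
  | [_], hh, _ => by rw [hh]; rfl
  | a :: b :: t, hh, hτ => by
    have ih := histFrom_eq_of_follows hh.2 fun v w t' hs =>
      hτ v w t' (hs.trans (List.suffix_cons a _))
    simp only [List.length_cons, Nat.add_sub_cancel] at ih ⊢
    rw [histFrom, ih, cur, List.headD_cons, hτ a b t List.suffix_rfl]

end Plays

section Promising

variable {σ : ι → List V → V} {x : ι → ℕ∞} {k : ℕ} {val : ι → ℕ} {j : ι} {h : List V}

lemma Promising.histCost_of_lt (hp : G.Promising v₀ σ x k val j h) (hj : val j < k) :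
    G.histCost v₀ j h = x j ∧ ∀ i, x i ≤ G.histCost v₀ i h := by
  obtain ⟨-, hp⟩ := hp
  split_ifs at hp
  exacts [hp, ⟨hp.1, hp.2.1⟩]

lemma Promising.histCost_eq_top (hp : G.Promising v₀ σ x k val j h) (hj : k ≤ val j) :
    G.histCost v₀ j h = ⊤ := by
  obtain ⟨-, hp⟩ := hp
  split_ifs at hp with hlate hjk
  · omega
  · exact hp
  · push Not at hlate
    exact hp.1.trans (hlate j hj)

lemma Promising.exists_lt (hp : G.Promising v₀ σ x k val j h) :
    (∃ i, k ≤ val i ∧ x i ≠ ⊤) ∨ ∃ i, val i < k ∧ x i < G.histCost v₀ i h := by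
  by_cases hlate : ∃ i, k ≤ val i ∧ x i ≠ ⊤
  · exact Or.inl hlate
  · obtain ⟨-, hp⟩ := hp
    rw [if_neg hlate] at hp
    obtain ⟨i, hi⟩ := hp.2.2
    push Not at hlate
    exact Or.inr ⟨i, not_le.1 fun hki => not_top_lt (hlate i hki ▸ hi), hi⟩

end Promising

noncomputable def replayThen (v₀ : V) (h : List V) (g : V → V) (h' : List V) : V :=
  if hs : ∃ v, v :: h' <:+ h then hs.choose else g (cur v₀ h')

section Deviation

variable {h : List V} {g : V → V}

lemma replayThen_of_suffix {h' : List V} {v : V} (hs : v :: h' <:+ h) :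
    replayThen v₀ h g h' = v := by
  have hex : ∃ v, v :: h' <:+ h := ⟨v, hs⟩
  rw [replayThen, dif_pos hex]
  have h₁ := List.suffix_iff_eq_drop.1 hs
  have h₂ := List.suffix_iff_eq_drop.1 hex.choose_spec
  simp only [List.length_cons] at h₁ h₂
  exact (List.cons.inj (h₂.trans h₁.symm)).1

lemma replayThen_of_length_le {h' : List V} (hl : h.length ≤ h'.length) :
    replayThen v₀ h g h' = g (cur v₀ h') :=
  dif_neg fun ⟨_, hs⟩ => by simpa using hs.length_le.trans hl

lemma isStrat_replayThen (hh : G.IsHist v₀ h) (hg : ∀ u, G.E u (g u)) (j : ι) :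
    G.IsStrat v₀ j (replayThen v₀ h g) := by
  intro h' hh' _
  rw [replayThen]
  split_ifs with hs
  · obtain ⟨w, t, rfl⟩ := List.exists_cons_of_length_pos hh'.length_pos
    exact hh.edge_of_suffix hs.choose_spec
  · exact hg _

variable [DecidableEq ι] {σ : ι → List V → V} {j : ι}

lemma IsProfile.update (hprof : G.IsProfile v₀ σ) {σ' : List V → V} (hσ' : G.IsStrat v₀ j σ') :
    G.IsProfile v₀ (Function.update σ j σ') := fun i => by
  by_cases hij : i = j
  · subst hij
    rwa [Function.update_self]
  · rw [Function.update_of_ne hij]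
    exact hprof i

lemma histFrom_replayThen (hh : G.IsHist v₀ h) (hcons : G.ConsistentWith v₀ σ j h) :
    G.histFrom v₀ (Function.update σ j (replayThen v₀ h g)) [v₀] (h.length - 1) = h :=
  histFrom_eq_of_follows G v₀ _ hh fun v w t hs => by
    by_cases hw : G.owner w = j
    · rw [hw, Function.update_self, replayThen_of_suffix hs]
    · rw [Function.update_of_ne hw, ← hcons.eq_of_suffix hs hw]

noncomputable def deviationPlay (G : QRGame ι V) (v₀ : V) (σ : ι → List V → V) (j : ι)
    (h : List V) (g : V → V) : ℕ → V :=
  G.fullPlay v₀ (Function.update σ j (replayThen v₀ h g)) [v₀]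

lemma histCost_eq_costLT_deviationPlay (hh : G.IsHist v₀ h)
    (hcons : G.ConsistentWith v₀ σ j h) (i : ι) :
    G.histCost v₀ i h = G.costLT i (G.deviationPlay v₀ σ j h g) h.length :=
  G.costLT_congr fun t ht => by
    rw [deviationPlay, ← getD_reverse_histFrom G v₀ _ (Nat.le_sub_one_of_lt ht),
      histFrom_replayThen hh hcons]

lemma deviationPlay_start (hh : G.IsHist v₀ h) (hcons : G.ConsistentWith v₀ σ j h) :
    G.deviationPlay v₀ σ j h g (h.length - 1) = cur v₀ h := by
  rw [deviationPlay, ← cur_histFrom, histFrom_replayThen hh hcons]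

lemma deviationPlay_edge (hprof : G.IsProfile v₀ σ) (hh : G.IsHist v₀ h)
    (hg : ∀ u, G.E u (g u)) (t : ℕ) :
    G.E (G.deviationPlay v₀ σ j h g t) (G.deviationPlay v₀ σ j h g (t + 1)) :=
  fullPlay_edge G v₀ _ (hprof.update (isStrat_replayThen hh hg j)) t

lemma deviationPlay_succ {t : ℕ} (ht : h.length ≤ t + 1)
    (hj : G.owner (G.deviationPlay v₀ σ j h g t) = j) :
    G.deviationPlay v₀ σ j h g (t + 1) = g (G.deviationPlay v₀ σ j h g t) := by
  rw [deviationPlay] at hj ⊢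
  rw [fullPlay_succ, hj, Function.update_self, replayThen_of_length_le, cur_histFrom]
  rw [histFrom_length, List.length_singleton]
  omega

lemma IsSecure.not_prec_deviationPlay (hsec : G.IsSecure v₀ σ) (hh : G.IsHist v₀ h)
    (hg : ∀ u, G.E u (g u)) :
    ¬ Prec j (fun i => G.cost i (G.outcome v₀ σ)) fun i => G.cost i (G.deviationPlay v₀ σ j h g) :=
  fun hprec => hsec ⟨j, replayThen v₀ h g, isStrat_replayThen hh hg j, hprec⟩

end Deviation

lemma prec_cost_of_early_late {j : ι} {x : ι → ℕ∞} {π : ℕ → V} {m : ℕ} (early : Set ι)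
    (hearly : ∀ i ∈ early, x i < m ∧ x i ≤ G.costLT i π m)
    (hlate : ∀ i ∉ early, i ≠ j → G.cost i π = ⊤) (hj : G.cost j π = x j)
    (hstrict : (∃ i ∉ early, i ≠ j ∧ x i ≠ ⊤) ∨ ∃ i ∈ early, x i < G.costLT i π m) :
    Prec j x fun i => G.cost i π := by
  refine Or.inr ⟨hj.symm, fun i => ?_, ?_⟩
  · by_cases hi : i ∈ early
    · exact G.le_cost_of_le_costLT (hearly i hi).2 (hearly i hi).1.le
    · by_cases hij : i = j
      · exact hij ▸ hj.ge
      · show x i ≤ G.cost i π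
        rw [hlate i hi hij]
        exact le_top
  · rcases hstrict with ⟨i, hi, hij, hxi⟩ | ⟨i, hi, hlt⟩
    · exact ⟨i, show x i < G.cost i π by rw [hlate i hi hij]; exact hxi.lt_top⟩
    · exact ⟨i, G.lt_cost_of_lt_costLT hlt (hearly i hi).1⟩

section SecureEquilibrium

variable [DecidableEq ι] [Fintype V] {σ : ι → List V → V} {j : ι} {h : List V}

theorem coalitionWinsML_of_deviations (hprof : G.IsProfile v₀ σ) (hsec : G.IsSecure v₀ σ)
    (hh : G.IsHist v₀ h) (hcons : G.ConsistentWith v₀ σ j h) {R S : Set V}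
    (hdev : ∀ π : ℕ → V, (∀ i, G.histCost v₀ i h = G.costLT i π h.length) →
      ((∀ s, π (h.length - 1 + s) ∈ S) → ∀ s, π (h.length - 1 + s) ∉ R) →
      Prec j (fun i => G.cost i (G.outcome v₀ σ)) fun i => G.cost i π) :
    G.CoalitionWinsML j R S (cur v₀ h) := by
  by_cases hwin : cur v₀ h ∈ winRegion G.E {u | G.owner u = j} R S
  · exact exists_strategy_of_mem_winRegion G.total hwin
  obtain ⟨g, hgE, hg⟩ := exists_counterStrategy_of_not_mem_winRegion (R := R) (S := S)
    (P := {u | G.owner u = j}) G.total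
  refine absurd (hdev _ (histCost_eq_costLT_deviationPlay hh hcons) (hg _ ?_ ?_ ?_))
    (hsec.not_prec_deviationPlay hh hgE)
  · rwa [Nat.add_zero, deviationPlay_start hh hcons]
  · exact fun s => deviationPlay_edge hprof hh hgE _
  · exact fun s hs => deviationPlay_succ (t := h.length - 1 + s) (by omega) hs

theorem coalitionWinsML_avoid_goal (hprof : G.IsProfile v₀ σ) (hsec : G.IsSecure v₀ σ)
    (hh : G.IsHist v₀ h) (hcons : G.ConsistentWith v₀ σ j h)
    (hxj : ((h.length - 1 + Fintype.card V : ℕ) : ℕ∞) ≤ G.cost j (G.outcome v₀ σ)) :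
    G.CoalitionWinsML j Set.univ (G.F j)ᶜ (cur v₀ h) := by
  by_cases hsafe : cur v₀ h ∈ safeRegion G.E {u | G.owner u = j} (G.F j)ᶜ
  · exact exists_strategy_of_mem_winRegion (R := Set.univ) G.total
      (Set.mem_iUnion.2 ⟨0, trivial, hsafe⟩)
  obtain ⟨g, hgE, hg⟩ := exists_counterStrategy_of_not_mem_safeRegion
    (P := {u | G.owner u = j}) (S := (G.F j)ᶜ) G.total (by simpa using G.F_ne j)
  obtain ⟨s, hs, hF⟩ := hg (fun s => G.deviationPlay v₀ σ j h g (h.length - 1 + s))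
    (by rwa [Nat.add_zero, deviationPlay_start hh hcons])
    (fun s => deviationPlay_edge hprof hh hgE _)
    (fun s hs => deviationPlay_succ (t := h.length - 1 + s) (by omega) hs)
  refine (hsec.not_prec_deviationPlay (j := j) hh hgE (Or.inl ?_)).elim
  calc G.cost j _ ≤ ((h.length - 1 + s : ℕ) : ℕ∞) := G.cost_le (not_not.1 hF)
    _ < ((h.length - 1 + Fintype.card V : ℕ) : ℕ∞) := by exact_mod_cast (by omega)
    _ ≤ _ := hxj

variable {x : ι → ℕ∞}

theorem coalitionWinsML_of_early_late (hprof : G.IsProfile v₀ σ) (hsec : G.IsSecure v₀ σ)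
    (hh : G.IsHist v₀ h) (hcons : G.ConsistentWith v₀ σ j h)
    (hx : ∀ i, x i = G.cost i (G.outcome v₀ σ)) (early : Set ι) {R S : Set V}
    (hR : ∀ i ∉ early, i ≠ j → G.F i ⊆ R)
    (hearly : ∀ i ∈ early, x i < h.length ∧ x i ≤ G.histCost v₀ i h)
    (hlate : ∀ i ∉ early, G.histCost v₀ i h = ⊤)
    (hstrict : (∃ i ∉ early, i ≠ j ∧ x i ≠ ⊤) ∨ ∃ i ∈ early, x i < G.histCost v₀ i h)
    (hj : ∀ π : ℕ → V, G.histCost v₀ j h = G.costLT j π h.length →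
      (∀ s, π (h.length - 1 + s) ∈ S) → G.cost j π = x j)
    (hleave : ∀ (π : ℕ → V) s, π (h.length - 1 + s) ∉ S → G.cost j π < x j) :
    G.CoalitionWinsML j R S (cur v₀ h) := by
  obtain rfl : x = fun i => G.cost i (G.outcome v₀ σ) := funext hx
  refine coalitionWinsML_of_deviations hprof hsec hh hcons fun π hd htail => ?_
  by_cases hS : ∀ s, π (h.length - 1 + s) ∈ S
  · refine G.prec_cost_of_early_late early (fun i hi => hd i ▸ hearly i hi)
      (fun i hi hij => ?_) (hj π (hd j) hS) (by simpa only [hd] using hstrict)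
    exact G.cost_eq_top_of_tail (hd i ▸ hlate i hi) (Nat.sub_le _ _)
      fun s hF => htail hS s (hR i hi hij hF)
  · push Not at hS
    obtain ⟨s, hs⟩ := hS
    exact Or.inl (hleave π s hs)

variable {k : ℕ} {val : ι → ℕ}

theorem coalitionWinsML_late_goals_of_lt (hprof : G.IsProfile v₀ σ) (hsec : G.IsSecure v₀ σ)
    (hh : G.IsHist v₀ h) (hx : ∀ i, x i = G.cost i (G.outcome v₀ σ))
    (hprom : G.Promising v₀ σ x k val j h) (hearly : ∀ i, val i < k → x i < h.length)
    (hlate : ∀ i, k ≤ val i → (h.length : ℕ∞) ≤ x i) (hjk : val j < k) :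
    G.CoalitionWinsML j (⋃ i ∈ {i | k ≤ val i}, G.F i) Set.univ (cur v₀ h) := by
  obtain ⟨hdj, hdle⟩ := hprom.histCost_of_lt hjk
  refine coalitionWinsML_of_early_late hprof hsec hh hprom.1 hx {i | val i < k}
    (fun i hi _ => Set.subset_biUnion_of_mem (u := G.F) (show k ≤ val i from not_lt.1 hi))
    (fun i hi => ⟨hearly i hi, hdle i⟩)
    (fun i hi => G.costLT_eq_top_of_le ((hlate i (not_lt.1 hi)).trans (hdle i)))
    ?_ (fun π hdπ _ => ?_) (fun π s hs => absurd trivial hs)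
  · rcases hprom.exists_lt with ⟨i, hi, hxi⟩ | hlt
    · exact Or.inl ⟨i, not_lt.2 hi, fun hij => by subst hij; omega, hxi⟩
    · exact Or.inr hlt
  · rw [← hdj, hdπ, G.cost_eq_costLT_of_ne_top]
    rw [← hdπ, hdj]
    exact (hearly j hjk).ne_top

theorem coalitionWinsML_late_goals_of_top (hprof : G.IsProfile v₀ σ) (hsec : G.IsSecure v₀ σ)
    (hh : G.IsHist v₀ h) (hx : ∀ i, x i = G.cost i (G.outcome v₀ σ))
    (hprom : G.Promising v₀ σ x k val j h) (hearly : ∀ i, val i < k → x i < h.length)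
    (hlate : ∀ i, k ≤ val i → (h.length : ℕ∞) ≤ x i) (hkj : k ≤ val j) (hxj : x j = ⊤)
    (hpe : PrecEq j (fun i => G.costLT i (G.outcome v₀ σ) h.length) fun i => G.histCost v₀ i h) :
    G.CoalitionWinsML j (⋃ i ∈ {i | k ≤ val i ∧ i ≠ j}, G.F i) (G.F j)ᶜ (cur v₀ h) := by
  have hprefix : ∀ i, G.costLT i (G.outcome v₀ σ) h.length ≤ G.histCost v₀ i h :=
    hpe.le (by rw [G.costLT_eq_top_of_le_cost (hx j ▸ hlate j hkj), hprom.histCost_eq_top hkj])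
  refine coalitionWinsML_of_early_late hprof hsec hh hprom.1 hx {i | val i < k}
    (fun i hi hij => Set.subset_biUnion_of_mem (u := G.F) ⟨not_lt.1 hi, hij⟩)
    (fun i hi => ⟨hearly i hi, ?_⟩) (fun i hi => ?_) ?_ (fun π hdπ hS => ?_) (fun π s hs => ?_)
  · rw [hx, ← G.costLT_eq_cost_of_lt (hx i ▸ hearly i hi)]
    exact hprefix i
  · rw [← top_le_iff, ← G.costLT_eq_top_of_le_cost (hx i ▸ hlate i (not_lt.1 hi))]
    exact hprefix i
  · rcases hprom.exists_lt with ⟨i, hi, hxi⟩ | hlt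
    · exact Or.inl ⟨i, not_lt.2 hi, fun hij => hxi (hij ▸ hxj), hxi⟩
    · exact Or.inr hlt
  · rw [hxj]
    exact G.cost_eq_top_of_tail (hdπ ▸ hprom.histCost_eq_top hkj) (Nat.sub_le _ _) hS
  · rw [hxj]
    exact (G.cost_le (not_not.1 hs)).trans_lt (ENat.natCast_lt_top _)

end SecureEquilibrium

end QRGame

/-- Players are `0, …, n-1`, so the paper's `1`-based "`i ≤ k`" reads `(i : ℕ) < k`, and
`|h| = h.length - 1` is the number of edges of `h`. -/
theorem coalition_memoryless_winning_strategy_general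
    {V : Type} [Fintype V] {n : ℕ}
    (G : QRGame (Fin n) V) (v₀ : V)
    (σ : Fin n → List V → V) (hprof : G.IsProfile v₀ σ) (hsec : G.IsSecure v₀ σ)
    (x : Fin n → ℕ∞) (hx : ∀ i, x i = G.cost i (G.outcome v₀ σ))
    (j : Fin n) (h : List V) (hhist : G.IsHist v₀ h)
    (k l : ℕ) (hkl : k ≤ l)
    (hk : ∀ i : Fin n, (i : ℕ) < k → x i ≤ ((h.length - 1 : ℕ) : ℕ∞))
    (hk' : ∀ i : Fin n, k ≤ (i : ℕ) →
      ((h.length - 1 + Fintype.card V : ℕ) : ℕ∞) ≤ x i)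
    (hl' : ∀ i : Fin n, l ≤ (i : ℕ) → x i = ⊤)
    (hprom : G.Promising v₀ σ x k (fun i => (i : ℕ)) j h) :
    (((j : ℕ) < k →
        G.CoalitionWinsML j (⋃ i ∈ {i : Fin n | k ≤ (i : ℕ)}, G.F i)
          Set.univ (QRGame.cur v₀ h)) ∧
      (k ≤ (j : ℕ) → (j : ℕ) < l →
        G.CoalitionWinsML j Set.univ (G.F j)ᶜ (QRGame.cur v₀ h)) ∧
      (l ≤ (j : ℕ) →
        PrecEq j (fun i => G.costLT i (G.outcome v₀ σ) h.length)
          (fun i => G.histCost v₀ i h) →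
        G.CoalitionWinsML j (⋃ i ∈ {i : Fin n | k ≤ (i : ℕ) ∧ i ≠ j}, G.F i)
          (G.F j)ᶜ (QRGame.cur v₀ h)) ∧
      (l ≤ (j : ℕ) →
        ¬ PrecEq j (fun i => G.costLT i (G.outcome v₀ σ) h.length)
          (fun i => G.histCost v₀ i h) →
        G.CoalitionWinsML j Set.univ (G.F j)ᶜ (QRGame.cur v₀ h))) := by
  have hV : 0 < Fintype.card V := Fintype.card_pos_iff.2 ⟨v₀⟩
  have hlen := hhist.length_pos
  have hearly : ∀ i : Fin n, (i : ℕ) < k → x i < h.length := fun i hi =>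
    (hk i hi).trans_lt (by exact_mod_cast Nat.sub_lt hlen one_pos)
  have hlate : ∀ i : Fin n, k ≤ (i : ℕ) → (h.length : ℕ∞) ≤ x i := fun i hi =>
    le_trans (by exact_mod_cast (by omega : h.length ≤ h.length - 1 + Fintype.card V)) (hk' i hi)
  have havoid := fun hxj => G.coalitionWinsML_avoid_goal hprof hsec hhist hprom.1 (hx j ▸ hxj)
  refine ⟨fun hjk => ?_, fun hkj _ => havoid (hk' j hkj), fun hlj hpe => ?_,
    fun hlj _ => havoid (hl' j hlj ▸ le_top)⟩
  · exact G.coalitionWinsML_late_goals_of_lt hprof hsec hhist hx hprom hearly hlate hjk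
  · exact G.coalitionWinsML_late_goals_of_top hprof hsec hhist hx hprom hearly hlate
      (hkl.trans hlj) (hl' j hlj) hpe

/-- Lemma 5.3: let `(σ_i)` be a secure equilibrium with outcome `ρ` and cost
profile `x`, and `h` a `j`-promising history w.r.t. `(σ_i)`.  Writing the
players as `0, …, n-1` (so that the paper's `1`-based "`x₁ ≤ … ≤ x_k ≤ |h| <
|h| + |V| ≤ x_{k+1} ≤ … ≤ x_l < x_{l+1} = … = x_n = +∞`" becomes the
hypotheses below, with `|h| = h.length - 1` the number of edges of `h`), the
coalition `Π ∖ {j}` has a memoryless winning strategy from `v = last(h)` in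
the reachability under safety game `𝒢_{-j} = (G_{-j}, R, S)` with `R` and `S`
as prescribed by the four cases of the lemma. -/
theorem coalition_memoryless_winning_strategy
    {V : Type} [Fintype V] {n : ℕ}
    (G : QRGame (Fin n) V) (v₀ : V)
    (σ : Fin n → List V → V) (hprof : G.IsProfile v₀ σ) (hsec : G.IsSecure v₀ σ)
    (x : Fin n → ℕ∞) (hx : ∀ i, x i = G.cost i (G.outcome v₀ σ))
    (hmono : Monotone x)
    (j : Fin n) (h : List V) (hhist : G.IsHist v₀ h)
    (k l : ℕ) (hkl : k ≤ l) (hln : l ≤ n)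
    (hk : ∀ i : Fin n, (i : ℕ) < k → x i ≤ ((h.length - 1 : ℕ) : ℕ∞))
    (hk' : ∀ i : Fin n, k ≤ (i : ℕ) →
      ((h.length - 1 + Fintype.card V : ℕ) : ℕ∞) ≤ x i)
    (hl : ∀ i : Fin n, (i : ℕ) < l → x i ≠ ⊤)
    (hl' : ∀ i : Fin n, l ≤ (i : ℕ) → x i = ⊤)
    (hprom : G.Promising v₀ σ x k (fun i => (i : ℕ)) j h) :
    (((j : ℕ) < k →
        G.CoalitionWinsML j (⋃ i ∈ {i : Fin n | k ≤ (i : ℕ)}, G.F i)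
          Set.univ (QRGame.cur v₀ h)) ∧
      (k ≤ (j : ℕ) → (j : ℕ) < l →
        G.CoalitionWinsML j Set.univ (G.F j)ᶜ (QRGame.cur v₀ h)) ∧
      (l ≤ (j : ℕ) →
        PrecEq j (fun i => G.costLT i (G.outcome v₀ σ) h.length)
          (fun i => G.histCost v₀ i h) →
        G.CoalitionWinsML j (⋃ i ∈ {i : Fin n | k ≤ (i : ℕ) ∧ i ≠ j}, G.F i)
          (G.F j)ᶜ (QRGame.cur v₀ h)) ∧
      (l ≤ (j : ℕ) →
        ¬ PrecEq j (fun i => G.costLT i (G.outcome v₀ σ) h.length)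
          (fun i => G.histCost v₀ i h) →
        G.CoalitionWinsML j Set.univ (G.F j)ᶜ (QRGame.cur v₀ h))) :=
  coalition_memoryless_winning_strategy_general G v₀ σ hprof hsec x hx j h hhist k l hkl hk hk' hl'
    hprom
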